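/- Let N, n ≥ 1, let c₁, c₂ ≥ 0, let L, K ∈ ℝ^{N×N} with L̃ := L + K, Lˢ := (L + Lᵀ)/2, Kˢ := (K + Kᵀ)/2, L̃ˢ := (L̃ + L̃ᵀ)/2, and let f : ℝ^n × ℝ^n → ℝ^n and ρ₁, ρ₂ ≥ 0 satisfy ‖f(x₁,v₁) − f(x₂,v₂)‖ ≤ ρ₁‖x₁ − x₂‖ + ρ₂‖v₁ − v₂‖ for all x₁, x₂, v₁, v₂ ∈ ℝ^n. Set Δ₃ := (c₁ρ₂ + c₂ρ₁)/2, Δ₁ := c₁ρ₁ + Δ₃, Δ₂ := c₂ρ₂ + Δ₃, and define P = [[2c₁c₂ L̃ˢ, c₁ I_N],[c₁ I_N, c₂ I_N]], H₂ = [[0_N, I_N],[−c₁ L, −c₂ L]], and R₂ = [[Δ₁ I_N − c₁² Lˢ, c₁c₂ Kˢ],[c₁c₂ Kˢ, (c₁ + Δ₂) I_N − c₂² Lˢ]]. For x₁,…,x_N, v₁,…,v_N, x₀, v₀ ∈ ℝ^n, let x̃ ∈ ℝ^{Nn} be the stacked vector with blocks x̃ᵢ = xᵢ − x₀, ṽ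 ∈ ℝ^{Nn} with blocks ṽᵢ = vᵢ − v₀, ξ = (x̃ᵀ, ṽᵀ)ᵀ ∈ ℝ^{2Nn}, ΔF ∈ ℝ^{Nn} with blocks ΔFᵢ = f(xᵢ,vᵢ) − f(x₀,v₀), and F̃ = (0ᵀ, ΔFᵀ)ᵀ ∈ ℝ^{2Nn}. Then ξᵀ(P ⊗ I_n)(F̃ + (H₂ ⊗ I_n)ξ) ≤ ξᵀ(R₂ ⊗ I_n)ξ. -/

import Mathlib

open Matrix Kronecker RealInnerProductSpace

lemma dot_transpose {I : Type*} [Fintype I] (A : Matrix I I ℝ) (u w : I → ℝ) :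
    u ⬝ᵥ Aᵀ.mulVec w = w ⬝ᵥ A.mulVec u := by
  rw [Matrix.mulVec_transpose, dotProduct_comm, ← Matrix.dotProduct_mulVec]

lemma kron_mulVec_slice {I : Type*} [Fintype I] [DecidableEq I] {n : ℕ}
    (M : Matrix I I ℝ) (w : I × Fin n → ℝ) (a : I) (j : Fin n) :
    ((M ⊗ₖ (1 : Matrix (Fin n) (Fin n) ℝ)).mulVec w) (a, j)
      = (M.mulVec (fun b => w (b, j))) a := by
  simp [Matrix.mulVec, dotProduct, Matrix.kroneckerMap_apply, Fintype.sum_prod_type,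
    Matrix.one_apply, mul_ite, ite_mul, mul_one, mul_zero, zero_mul, Finset.sum_ite_eq]

lemma kron_slice {I : Type*} [Fintype I] [DecidableEq I] {n : ℕ}
    (M : Matrix I I ℝ) (u w : I × Fin n → ℝ) :
    u ⬝ᵥ (M ⊗ₖ (1 : Matrix (Fin n) (Fin n) ℝ)).mulVec w
      = ∑ j : Fin n, (fun a => u (a, j)) ⬝ᵥ M.mulVec (fun b => w (b, j)) := by
  simp only [dotProduct, Fintype.sum_prod_type]
  rw [Finset.sum_comm]
  refine Finset.sum_congr rfl fun j _ => Finset.sum_congr rfl fun a _ => ?_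
  rw [kron_mulVec_slice]

lemma perj {N : ℕ} (c₁ c₂ Δ₁ Δ₂ : ℝ) (L K : Matrix (Fin N) (Fin N) ℝ)
    (X V G : Fin N → ℝ) :
    Sum.elim X V ⬝ᵥ (Matrix.fromBlocks
        ((2 * c₁ * c₂) • ((1 / 2 : ℝ) • ((L + K) + (L + K)ᵀ)))
        (c₁ • (1 : Matrix (Fin N) (Fin N) ℝ))
        (c₁ • (1 : Matrix (Fin N) (Fin N) ℝ))
        (c₂ • (1 : Matrix (Fin N) (Fin N) ℝ))).mulVec
      (Sum.elim (0 : Fin N → ℝ) G +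
        (Matrix.fromBlocks 0 (1 : Matrix (Fin N) (Fin N) ℝ)
          (-(c₁ • L)) (-(c₂ • L))).mulVec (Sum.elim X V))
      = Sum.elim X V ⬝ᵥ (Matrix.fromBlocks
          (Δ₁ • (1 : Matrix (Fin N) (Fin N) ℝ) - (c₁ ^ 2) • ((1 / 2 : ℝ) • (L + Lᵀ)))
          ((c₁ * c₂) • ((1 / 2 : ℝ) • (K + Kᵀ)))
          ((c₁ * c₂) • ((1 / 2 : ℝ) • (K + Kᵀ)))
          ((c₁ + Δ₂) • (1 : Matrix (Fin N) (Fin N) ℝ) - (c₂ ^ 2) • ((1 / 2 : ℝ) • (L + Lᵀ)))).mulVec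
          (Sum.elim X V)
        - (Δ₁ * (X ⬝ᵥ X) + Δ₂ * (V ⬝ᵥ V)) + (c₁ * (X ⬝ᵥ G) + c₂ * (V ⬝ᵥ G)) := by
  simp only [Matrix.fromBlocks_mulVec, Matrix.mulVec_add, Sum.elim_comp_inl, Sum.elim_comp_inr,
    Matrix.add_mulVec, Matrix.sub_mulVec, Matrix.smul_mulVec, Matrix.neg_mulVec,
    Matrix.one_mulVec, Matrix.zero_mulVec, Matrix.transpose_add, Matrix.mulVec_zero,
    sumElim_dotProduct_sumElim, dotProduct_add, dotProduct_sub,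
    dotProduct_smul, dotProduct_neg, dotProduct_zero, Pi.add_apply,
    smul_eq_mul, mul_zero, add_zero, zero_add]
  rw [dot_transpose L X V, dot_transpose K X V, dot_transpose K V X, dot_transpose L X X,
    dot_transpose L V V]
  ring

lemma scalar_bound (c₁ c₂ ρ₁ ρ₂ A B g i₁ i₂ : ℝ) (hc₁ : 0 ≤ c₁) (hc₂ : 0 ≤ c₂)
    (hρ₁ : 0 ≤ ρ₁) (hρ₂ : 0 ≤ ρ₂) (hA : 0 ≤ A) (hB : 0 ≤ B)
    (h1 : i₁ ≤ A * g) (h2 : i₂ ≤ B * g) (h3 : g ≤ ρ₁ * A + ρ₂ * B) (hg : 0 ≤ g) :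
    c₁ * i₁ + c₂ * i₂ ≤ (c₁ * ρ₁ + (c₁ * ρ₂ + c₂ * ρ₁) / 2) * A ^ 2
      + (c₂ * ρ₂ + (c₁ * ρ₂ + c₂ * ρ₁) / 2) * B ^ 2 := by
  have s1 : c₁ * i₁ + c₂ * i₂ ≤ (c₁ * A + c₂ * B) * g := by nlinarith
  have s2 : (c₁ * A + c₂ * B) * g ≤ (c₁ * A + c₂ * B) * (ρ₁ * A + ρ₂ * B) :=
    mul_le_mul_of_nonneg_left h3 (by positivity)
  have s3 : (c₁ * A + c₂ * B) * (ρ₁ * A + ρ₂ * B)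
      ≤ (c₁ * ρ₁ + (c₁ * ρ₂ + c₂ * ρ₁) / 2) * A ^ 2
        + (c₂ * ρ₂ + (c₁ * ρ₂ + c₂ * ρ₁) / 2) * B ^ 2 := by
    nlinarith [mul_nonneg (mul_nonneg hc₁ hρ₂) (sq_nonneg (A - B)),
      mul_nonneg (mul_nonneg hc₂ hρ₁) (sq_nonneg (A - B))]
  linarith

/-- Drift bound (28) in the proof of Theorem 1 (intervals where the control
input fails): the derivative of the Lyapunov function along the uncontrolled
lag-error dynamics is bounded by the quadratic form of `R₂`. -/
theorem stmt_11 (N n : ℕ) (hN : 1 ≤ N) (hn : 1 ≤ n)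
    (c₁ c₂ : ℝ) (hc₁ : 0 ≤ c₁) (hc₂ : 0 ≤ c₂)
    (L K : Matrix (Fin N) (Fin N) ℝ)
    (f : EuclideanSpace ℝ (Fin n) → EuclideanSpace ℝ (Fin n) → EuclideanSpace ℝ (Fin n))
    (ρ₁ ρ₂ : ℝ) (hρ₁ : 0 ≤ ρ₁) (hρ₂ : 0 ≤ ρ₂)
    (hLip : ∀ x₁ x₂ v₁ v₂ : EuclideanSpace ℝ (Fin n),
      ‖f x₁ v₁ - f x₂ v₂‖ ≤ ρ₁ * ‖x₁ - x₂‖ + ρ₂ * ‖v₁ - v₂‖)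
    (x v : Fin N → EuclideanSpace ℝ (Fin n)) (x₀ v₀ : EuclideanSpace ℝ (Fin n)) :
    let Δ₃ : ℝ := (c₁ * ρ₂ + c₂ * ρ₁) / 2
    let Δ₁ : ℝ := c₁ * ρ₁ + Δ₃
    let Δ₂ : ℝ := c₂ * ρ₂ + Δ₃
    let Lt : Matrix (Fin N) (Fin N) ℝ := L + K
    let Lts : Matrix (Fin N) (Fin N) ℝ := (1 / 2 : ℝ) • (Lt + Ltᵀ)
    let Ls : Matrix (Fin N) (Fin N) ℝ := (1 / 2 : ℝ) • (L + Lᵀ)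
    let Ks : Matrix (Fin N) (Fin N) ℝ := (1 / 2 : ℝ) • (K + Kᵀ)
    let P : Matrix (Fin N ⊕ Fin N) (Fin N ⊕ Fin N) ℝ :=
      Matrix.fromBlocks ((2 * c₁ * c₂) • Lts) (c₁ • (1 : Matrix (Fin N) (Fin N) ℝ))
        (c₁ • (1 : Matrix (Fin N) (Fin N) ℝ)) (c₂ • (1 : Matrix (Fin N) (Fin N) ℝ))
    let H₂ : Matrix (Fin N ⊕ Fin N) (Fin N ⊕ Fin N) ℝ :=
      Matrix.fromBlocks 0 (1 : Matrix (Fin N) (Fin N) ℝ) (-(c₁ • L)) (-(c₂ • L))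
    let R₂ : Matrix (Fin N ⊕ Fin N) (Fin N ⊕ Fin N) ℝ :=
      Matrix.fromBlocks (Δ₁ • (1 : Matrix (Fin N) (Fin N) ℝ) - (c₁ ^ 2) • Ls)
        ((c₁ * c₂) • Ks) ((c₁ * c₂) • Ks)
        ((c₁ + Δ₂) • (1 : Matrix (Fin N) (Fin N) ℝ) - (c₂ ^ 2) • Ls)
    let ξ : (Fin N ⊕ Fin N) × Fin n → ℝ := fun p =>
      match p.1 with
      | Sum.inl i => (x i - x₀) p.2
      | Sum.inr i => (v i - v₀) p.2
    let Ft : (Fin N ⊕ Fin N) × Fin n → ℝ := fun p =>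
      match p.1 with
      | Sum.inl _ => 0
      | Sum.inr i => (f (x i) (v i) - f x₀ v₀) p.2
    ξ ⬝ᵥ ((P ⊗ₖ (1 : Matrix (Fin n) (Fin n) ℝ)).mulVec
        (Ft + (H₂ ⊗ₖ (1 : Matrix (Fin n) (Fin n) ℝ)).mulVec ξ)) ≤
      ξ ⬝ᵥ ((R₂ ⊗ₖ (1 : Matrix (Fin n) (Fin n) ℝ)).mulVec ξ) := by
  intro Δ₃ Δ₁ Δ₂ Lt Lts Ls Ks P H₂ R₂ ξ Ft
  set X : Fin n → Fin N → ℝ := fun j i => (x i - x₀) j with hX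
  set W : Fin n → Fin N → ℝ := fun j i => (v i - v₀) j with hW
  set G : Fin n → Fin N → ℝ := fun j i => (f (x i) (v i) - f x₀ v₀) j with hG
  have hξs : ∀ j : Fin n, (fun a => ξ (a, j)) = Sum.elim (X j) (W j) := by
    intro j; funext a; cases a <;> rfl
  have hws : ∀ j : Fin n,
      (fun b => (Ft + (H₂ ⊗ₖ (1 : Matrix (Fin n) (Fin n) ℝ)).mulVec ξ) (b, j))
        = Sum.elim (0 : Fin N → ℝ) (G j) + H₂.mulVec (Sum.elim (X j) (W j)) := by
    intro j; funext b
    have h1 : ((H₂ ⊗ₖ (1 : Matrix (Fin n) (Fin n) ℝ)).mulVec ξ) (b, j)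
        = (H₂.mulVec (fun c => ξ (c, j))) b := kron_mulVec_slice H₂ ξ b j
    have hFt : Ft (b, j) = Sum.elim (0 : Fin N → ℝ) (G j) b := by cases b <;> rfl
    simp only [Pi.add_apply, h1, hξs j, hFt]
  rw [kron_slice P ξ _, kron_slice R₂ ξ ξ]
  simp only [hξs, hws]
  have hP : P = Matrix.fromBlocks
      ((2 * c₁ * c₂) • ((1 / 2 : ℝ) • ((L + K) + (L + K)ᵀ)))
      (c₁ • (1 : Matrix (Fin N) (Fin N) ℝ)) (c₁ • (1 : Matrix (Fin N) (Fin N) ℝ))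
      (c₂ • (1 : Matrix (Fin N) (Fin N) ℝ)) := rfl
  have hH : H₂ = Matrix.fromBlocks 0 (1 : Matrix (Fin N) (Fin N) ℝ)
      (-(c₁ • L)) (-(c₂ • L)) := rfl
  have hR : R₂ = Matrix.fromBlocks
      (Δ₁ • (1 : Matrix (Fin N) (Fin N) ℝ) - (c₁ ^ 2) • ((1 / 2 : ℝ) • (L + Lᵀ)))
      ((c₁ * c₂) • ((1 / 2 : ℝ) • (K + Kᵀ))) ((c₁ * c₂) • ((1 / 2 : ℝ) • (K + Kᵀ)))
      ((c₁ + Δ₂) • (1 : Matrix (Fin N) (Fin N) ℝ) - (c₂ ^ 2) • ((1 / 2 : ℝ) • (L + Lᵀ))) := rfl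
  rw [hP, hH, hR]
  have hstep : ∀ j : Fin n, Sum.elim (X j) (W j) ⬝ᵥ (Matrix.fromBlocks
      ((2 * c₁ * c₂) • ((1 / 2 : ℝ) • ((L + K) + (L + K)ᵀ)))
      (c₁ • (1 : Matrix (Fin N) (Fin N) ℝ)) (c₁ • (1 : Matrix (Fin N) (Fin N) ℝ))
      (c₂ • (1 : Matrix (Fin N) (Fin N) ℝ))).mulVec
      (Sum.elim (0 : Fin N → ℝ) (G j) +
        (Matrix.fromBlocks 0 (1 : Matrix (Fin N) (Fin N) ℝ)
          (-(c₁ • L)) (-(c₂ • L))).mulVec (Sum.elim (X j) (W j)))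
      = Sum.elim (X j) (W j) ⬝ᵥ (Matrix.fromBlocks
          (Δ₁ • (1 : Matrix (Fin N) (Fin N) ℝ) - (c₁ ^ 2) • ((1 / 2 : ℝ) • (L + Lᵀ)))
          ((c₁ * c₂) • ((1 / 2 : ℝ) • (K + Kᵀ))) ((c₁ * c₂) • ((1 / 2 : ℝ) • (K + Kᵀ)))
          ((c₁ + Δ₂) • (1 : Matrix (Fin N) (Fin N) ℝ)
            - (c₂ ^ 2) • ((1 / 2 : ℝ) • (L + Lᵀ)))).mulVec (Sum.elim (X j) (W j))
        - (Δ₁ * (X j ⬝ᵥ X j) + Δ₂ * (W j ⬝ᵥ W j))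
        + (c₁ * (X j ⬝ᵥ G j) + c₂ * (W j ⬝ᵥ G j)) :=
    fun j => perj c₁ c₂ Δ₁ Δ₂ L K (X j) (W j) (G j)
  rw [Finset.sum_congr rfl fun j _ => hstep j]
  rw [Finset.sum_add_distrib, Finset.sum_sub_distrib]
  have hkey : ∑ j : Fin n, (c₁ * (X j ⬝ᵥ G j) + c₂ * (W j ⬝ᵥ G j))
      ≤ ∑ j : Fin n, (Δ₁ * (X j ⬝ᵥ X j) + Δ₂ * (W j ⬝ᵥ W j)) := by
    have swap : ∀ (F : Fin n → Fin N → ℝ), ∑ j, ∑ i, F j i = ∑ i, ∑ j, F j i :=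
      fun F => Finset.sum_comm
    have e1 : ∑ j : Fin n, (c₁ * (X j ⬝ᵥ G j) + c₂ * (W j ⬝ᵥ G j))
        = ∑ i : Fin N, ∑ j : Fin n,
            (c₁ * (X j i * G j i) + c₂ * (W j i * G j i)) := by
      rw [← swap]
      simp [dotProduct, Finset.mul_sum, Finset.sum_add_distrib]
    have e2 : ∑ j : Fin n, (Δ₁ * (X j ⬝ᵥ X j) + Δ₂ * (W j ⬝ᵥ W j))
        = ∑ i : Fin N, ∑ j : Fin n,
            (Δ₁ * (X j i * X j i) + Δ₂ * (W j i * W j i)) := by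
      rw [← swap]
      simp [dotProduct, Finset.mul_sum, Finset.sum_add_distrib]
    rw [e1, e2]
    refine Finset.sum_le_sum fun i _ => ?_
    have ea : ∑ j : Fin n, X j i * G j i = ⟪x i - x₀, f (x i) (v i) - f x₀ v₀⟫ := by
      simp [hX, hG, PiLp.inner_apply, RCLike.inner_apply, conj_trivial]
      exact Finset.sum_congr rfl fun _ _ => mul_comm _ _
    have eb : ∑ j : Fin n, W j i * G j i = ⟪v i - v₀, f (x i) (v i) - f x₀ v₀⟫ := by
      simp [hW, hG, PiLp.inner_apply, RCLike.inner_apply, conj_trivial]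
      exact Finset.sum_congr rfl fun _ _ => mul_comm _ _
    have ec : ∑ j : Fin n, X j i * X j i = ‖x i - x₀‖ ^ 2 := by
      rw [← real_inner_self_eq_norm_sq]
      simp [hX, PiLp.inner_apply, RCLike.inner_apply, conj_trivial]
      rw [EuclideanSpace.norm_eq, Real.sq_sqrt (by positivity)]
      simp [sq]
    have ed : ∑ j : Fin n, W j i * W j i = ‖v i - v₀‖ ^ 2 := by
      rw [← real_inner_self_eq_norm_sq]
      simp [hW, PiLp.inner_apply, RCLike.inner_apply, conj_trivial]
      rw [EuclideanSpace.norm_eq, Real.sq_sqrt (by positivity)]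
      simp [sq]
    rw [Finset.sum_add_distrib, Finset.sum_add_distrib, ← Finset.mul_sum, ← Finset.mul_sum,
      ← Finset.mul_sum, ← Finset.mul_sum, ea, eb, ec, ed]
    have hΔ₁ : Δ₁ = c₁ * ρ₁ + (c₁ * ρ₂ + c₂ * ρ₁) / 2 := rfl
    have hΔ₂ : Δ₂ = c₂ * ρ₂ + (c₁ * ρ₂ + c₂ * ρ₁) / 2 := rfl
    rw [hΔ₁, hΔ₂]
    exact scalar_bound c₁ c₂ ρ₁ ρ₂ ‖x i - x₀‖ ‖v i - v₀‖ ‖f (x i) (v i) - f x₀ v₀‖ _ _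
      hc₁ hc₂ hρ₁ hρ₂ (norm_nonneg _) (norm_nonneg _)
      (real_inner_le_norm _ _) (real_inner_le_norm _ _)
      (hLip (x i) x₀ (v i) v₀) (norm_nonneg _)
  linarith
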